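/- Let I ⊆ K[[x_1,…,x_n]] be an ideal and T̄ a total normalized monomial order. If f_1,…,f_k ∈ I are elements whose initial exponents exp_{T̄}(f_i) = α_i are precisely the vertices of the diagram of initial exponents Δ(I) = {exp_{T̄}(f) : f ∈ I}, then f_1,…,f_k generate I. -/

import Mathlib

/-- The value `T̄(a) ∈ ℝ^r` of the tuple of linear forms with coefficient
matrix `c` at `a ∈ ℕ^n`. -/
def tvec {n r : ℕ} (c : Fin r → Fin n → ℝ) (a : Fin n →₀ ℕ) : Fin r → ℝ :=
  fun i => ∑ j, c i j * (a j : ℝ)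

/-- `a` is the initial exponent `exp_{T̄}(f)`: it lies in `supp(f)` and is the
unique `T̄`-minimal element of `supp(f)`. -/
def IsExpOf {K : Type*} [Field K] {n r : ℕ} (c : Fin r → Fin n → ℝ)
    (f : MvPowerSeries (Fin n) K) (a : Fin n →₀ ℕ) : Prop :=
  MvPowerSeries.coeff a f ≠ 0 ∧
    ∀ b : Fin n →₀ ℕ, MvPowerSeries.coeff b f ≠ 0 → b ≠ a →
      toLex (tvec c a) < toLex (tvec c b)

/-- The diagram of initial exponents `Δ(I) = {exp_{T̄}(f) : f ∈ I}`. -/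
def diagOfIdeal {K : Type*} [Field K] {n r : ℕ} (c : Fin r → Fin n → ℝ)
    (I : Ideal (MvPowerSeries (Fin n) K)) : Set (Fin n →₀ ℕ) :=
  {a | ∃ f ∈ I, IsExpOf c f a}

/-- `v` is a vertex of the diagram `Δ`: a minimal element of `Δ` with respect
to the componentwise order (equivalently, `v ∉ Δ \ (v + ℕ^n)`). -/
def IsVertex {n : ℕ} (Δ : Set (Fin n →₀ ℕ)) (v : Fin n →₀ ℕ) : Prop :=
  v ∈ Δ ∧ ∀ w ∈ Δ, (∀ t, w t ≤ v t) → w = v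

/-!
Divide `g ∈ I` by the `f i` à la Weierstrass–Hironaka, so that the remainder has no exponent in
the staircase `⋃ i, (α i + ℕⁿ)`: the coefficients of the quotients are determined one exponent
at a time, by well-founded recursion along `T̄` (well-founded because it refines the total
degree, whose level sets are finite). The remainder lies in `I`; were it nonzero, its initial
exponent would lie in `Δ(I)`, hence above some vertex `α i`, i.e. in the staircase. So the
remainder vanishes.
-/

theorem WellFounded.exists_isFixedPt {α β : Type*} [Nonempty β] {r : α → α → Prop}
    (hr : WellFounded r) (F : (α → β) → α → β)
    (hF : ∀ Q Q' x, (∀ y, r y x → Q y = Q' y) → F Q x = F Q' x) :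
    ∃ Q, Function.IsFixedPt F Q := by
  classical
  let b : β := Classical.arbitrary β
  refine ⟨hr.fix fun x ih => F (fun y => if h : r y x then ih y h else b) x, funext fun x => ?_⟩
  rw [hr.fix_eq]
  exact hF _ _ x fun y hy => by simp [hy]

namespace MvPowerSeries

variable {σ K ι : Type*} [Field K]

section DivQuotient

variable [DecidableEq ι]

open Finset.HasAntidiagonal

/-- `∑_{γ, s γ = j} Q γ • X^(γ - α j)`: the `j`-th quotient when the term `Q γ • X^γ` is charged
to the `s γ`-th divisor. -/
noncomputable def divQuotient (α : ι → σ →₀ ℕ) (s : (σ →₀ ℕ) → ι) (Q : (σ →₀ ℕ) → K) (j : ι) :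
    MvPowerSeries σ K :=
  fun a => if s (a + α j) = j then Q (a + α j) else 0

theorem coeff_divQuotient (α : ι → σ →₀ ℕ) (s : (σ →₀ ℕ) → ι) (Q : (σ →₀ ℕ) → K) (j : ι)
    (a : σ →₀ ℕ) :
    coeff a (divQuotient α s Q j) = if s (a + α j) = j then Q (a + α j) else 0 :=
  rfl

theorem divQuotient_sub (α : ι → σ →₀ ℕ) (s : (σ →₀ ℕ) → ι) (Q Q' : (σ →₀ ℕ) → K) (j : ι) :
    divQuotient α s (Q - Q') j = divQuotient α s Q j - divQuotient α s Q' j := by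
  ext a
  simp only [coeff_divQuotient, map_sub, Pi.sub_apply]
  split_ifs <;> simp

variable {r : (σ →₀ ℕ) → (σ →₀ ℕ) → Prop} (hadd : ∀ x a b, r a b → r (x + a) (x + b))
  {f : ι → MvPowerSeries σ K} {α : ι → σ →₀ ℕ}
  (hmin : ∀ j b, coeff b (f j) ≠ 0 → b ≠ α j → r (α j) b)
  {s : (σ →₀ ℕ) → ι} {D : (σ →₀ ℕ) → K} {δ : σ →₀ ℕ}
include hadd hmin

theorem coeff_divQuotient_mul_coeff_eq_zero (hD : ∀ γ, r γ δ → D γ = 0) {j : ι}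
    {p : (σ →₀ ℕ) × (σ →₀ ℕ)} (hp : p.1 + p.2 = δ) (hne : ¬(s δ = j ∧ p.2 = α j)) :
    coeff p.1 (divQuotient α s D j) * coeff p.2 (f j) = 0 := by
  rw [coeff_divQuotient]
  by_cases hsj : s (p.1 + α j) = j
  swap
  · rw [if_neg hsj, zero_mul]
  by_cases hb : p.2 = α j
  · rw [← hb, hp] at hsj
    exact absurd ⟨hsj, hb⟩ hne
  by_cases hf : coeff p.2 (f j) = 0
  · rw [hf, mul_zero]
  rw [if_pos hsj, hD _ (hp ▸ hadd p.1 _ _ (hmin j _ hf hb)), zero_mul]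

theorem coeff_sum_divQuotient_mul_of_eq_zero [Fintype ι] (hs : α (s δ) ≤ δ)
    (hD : ∀ γ, r γ δ → D γ = 0) :
    coeff δ (∑ j, divQuotient α s D j * f j) = D δ * coeff (α (s δ)) (f (s δ)) := by
  classical
  have hmem : (δ - α (s δ), α (s δ)) ∈ antidiagonal δ :=
    mem_antidiagonal.2 (tsub_add_cancel_of_le hs)
  rw [map_sum, Finset.sum_eq_single (s δ), coeff_mul, Finset.sum_eq_single_of_mem _ hmem,
    coeff_divQuotient, tsub_add_cancel_of_le hs, if_pos rfl]
  · rintro p hp hne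
    have hp := mem_antidiagonal.1 hp
    refine coeff_divQuotient_mul_coeff_eq_zero hadd hmin hD hp fun ⟨_, h2⟩ => ?_
    exact hne (Prod.ext (eq_tsub_of_add_eq (h2 ▸ hp)) h2)
  · intro j _ hj
    rw [coeff_mul]
    exact Finset.sum_eq_zero fun p hp => coeff_divQuotient_mul_coeff_eq_zero hadd hmin hD
      (mem_antidiagonal.1 hp) fun h => hj h.1.symm
  · exact fun h => (h (Finset.mem_univ _)).elim

end DivQuotient

theorem exists_coeff_sub_sum_mul_eq_zero [Fintype ι] (hwf : WellFounded r)
    (hadd : ∀ x a b, r a b → r (x + a) (x + b)) (f : ι → MvPowerSeries σ K) (α : ι → σ →₀ ℕ)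
    (hlead : ∀ j, coeff (α j) (f j) ≠ 0)
    (hmin : ∀ j b, coeff b (f j) ≠ 0 → b ≠ α j → r (α j) b) (g : MvPowerSeries σ K) :
    ∃ q : ι → MvPowerSeries σ K, ∀ γ, (∃ j, α j ≤ γ) → coeff γ (g - ∑ j, q j * f j) = 0 := by
  classical
  rcases isEmpty_or_nonempty ι with hι | hι
  · exact ⟨0, fun γ ⟨j, _⟩ => isEmptyElim j⟩
  obtain ⟨s, hs⟩ : ∃ s : (σ →₀ ℕ) → ι, ∀ γ j, α j ≤ γ → α (s γ) ≤ γ :=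
    ⟨fun γ => Classical.epsilon (α · ≤ γ),
      fun γ j h => Classical.epsilon_spec (p := (α · ≤ γ)) ⟨j, h⟩⟩
  let L : ((σ →₀ ℕ) → K) → MvPowerSeries σ K := fun Q => ∑ j, divQuotient α s Q j * f j
  -- `F Q δ` depends only on `Q` strictly below `δ`: the contribution
  -- `Q δ * coeff (α (s δ)) (f (s δ))` of `Q δ` to `coeff δ (L Q)` cancels
  let F : ((σ →₀ ℕ) → K) → (σ →₀ ℕ) → K := fun Q δ =>
    if α (s δ) ≤ δ then Q δ + coeff δ (g - L Q) / coeff (α (s δ)) (f (s δ)) else 0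
  obtain ⟨Q, hQ⟩ := hwf.exists_isFixedPt F fun Q Q' δ hQQ' => by
    simp only [F]
    split_ifs with hδ
    · have hlin := coeff_sum_divQuotient_mul_of_eq_zero hadd hmin hδ (D := Q - Q')
        fun γ hγ => sub_eq_zero.2 (hQQ' γ hγ)
      simp only [divQuotient_sub, sub_mul, Finset.sum_sub_distrib, map_sub, Pi.sub_apply] at hlin
      simp only [L, map_sub]
      field_simp [hlead (s δ)]
      linear_combination -hlin
    · rfl
  refine ⟨divQuotient α s Q, fun γ ⟨j, hj⟩ => ?_⟩
  have hγ := congrFun hQ γ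
  simp only [F, if_pos (hs γ j hj), add_eq_left, div_eq_zero_iff] at hγ
  exact hγ.resolve_right (hlead _)

end MvPowerSeries

section InitialExponent

variable {K : Type*} [Field K] {n r : ℕ}

theorem tvec_add (c : Fin r → Fin n → ℝ) (a b : Fin n →₀ ℕ) :
    tvec c (a + b) = tvec c a + tvec c b := by
  ext i
  simp only [tvec, Finsupp.coe_add, Pi.add_apply, Nat.cast_add, mul_add, Finset.sum_add_distrib]

theorem toLex_tvec_add_lt_add {c : Fin r → Fin n → ℝ} {a b : Fin n →₀ ℕ} (x : Fin n →₀ ℕ)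
    (h : toLex (tvec c a) < toLex (tvec c b)) :
    toLex (tvec c (x + a)) < toLex (tvec c (x + b)) := by
  rw [tvec_add, tvec_add, toLex_add, toLex_add]
  exact add_lt_add_right h _

theorem tvec_zero_eq_degree {c : Fin (r + 1) → Fin n → ℝ} (hnorm : ∀ j, c 0 j = 1)
    (a : Fin n →₀ ℕ) : tvec c a 0 = a.degree := by
  simp [tvec, hnorm, Finsupp.degree_eq_sum]

theorem degree_le_of_toLex_tvec_lt {c : Fin (r + 1) → Fin n → ℝ} (hnorm : ∀ j, c 0 j = 1)
    {a b : Fin n →₀ ℕ} (h : toLex (tvec c a) < toLex (tvec c b)) : a.degree ≤ b.degree := by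
  obtain ⟨i, hlow, hi⟩ := h
  have h0 : tvec c a 0 ≤ tvec c b 0 := by
    rcases eq_or_ne i 0 with rfl | hi0
    · exact hi.le
    · exact (hlow 0 (Fin.pos_of_ne_zero hi0)).le
  rwa [tvec_zero_eq_degree hnorm, tvec_zero_eq_degree hnorm, Nat.cast_le] at h0

theorem wellFounded_toLex_tvec_lt {c : Fin (r + 1) → Fin n → ℝ} (hnorm : ∀ j, c 0 j = 1) :
    WellFounded fun a b : Fin n →₀ ℕ => toLex (tvec c a) < toLex (tvec c b) := by
  let R : (Fin n →₀ ℕ) → (Fin n →₀ ℕ) → Prop := fun a b => toLex (tvec c a) < toLex (tvec c b)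
  have : IsStrictOrder _ R :=
    { irrefl := fun a => lt_irrefl (toLex (tvec c a)), trans := fun _ _ _ => lt_trans }
  refine Subrelation.wf (fun {a b} (h : R a b) => ?_)
    (WellFounded.prod_lex_of_wellFoundedOn_fiber (rα := (· < ·)) (rβ := R)
      (f := Finsupp.degree) (g := id) (InvImage.wf _ wellFounded_lt)
      fun d => (Finsupp.finite_of_degree_eq d).wellFoundedOn)
  rcases (degree_le_of_toLex_tvec_lt hnorm h).lt_or_eq with hlt | heq
  · exact Prod.Lex.left _ _ hlt
  · show Prod.Lex _ _ (a.degree, a) (b.degree, b)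
    exact heq ▸ Prod.Lex.right _ h

theorem exists_isExpOf {c : Fin (r + 1) → Fin n → ℝ} (hnorm : ∀ j, c 0 j = 1)
    (htotal : Function.Injective fun a : Fin n →₀ ℕ => tvec c a)
    {g : MvPowerSeries (Fin n) K} (hg : g ≠ 0) : ∃ a, IsExpOf c g a := by
  obtain ⟨a, ha, hmin⟩ := (wellFounded_toLex_tvec_lt hnorm).has_min
    {b | MvPowerSeries.coeff b g ≠ 0} (by simpa [Set.nonempty_def, MvPowerSeries.ext_iff] using hg)
  refine ⟨a, ha, fun b hb hba => ?_⟩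
  rcases lt_trichotomy (toLex (tvec c a)) (toLex (tvec c b)) with hlt | heq | hgt
  · exact hlt
  · exact absurd (htotal (toLex.injective heq)).symm hba
  · exact absurd hgt (hmin b hb)

end InitialExponent

theorem exists_isVertex_le {n : ℕ} {Δ : Set (Fin n →₀ ℕ)} {a : Fin n →₀ ℕ} (ha : a ∈ Δ) :
    ∃ v, IsVertex Δ v ∧ v ≤ a := by
  obtain ⟨v, ⟨hvΔ, hva⟩, hmin⟩ := wellFounded_lt.has_min {w | w ∈ Δ ∧ w ≤ a} ⟨a, ha, le_rfl⟩
  refine ⟨v, ⟨hvΔ, fun w hw hwv => ?_⟩, hva⟩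
  rw [← Finsupp.le_def] at hwv
  by_contra hne
  exact hmin w ⟨hw, hwv.trans hva⟩ (hwv.lt_of_ne hne)

theorem span_of_vertices_general {K : Type*} [Field K] {n k r : ℕ}
    (c : Fin (r + 1) → Fin n → ℝ)
    (hnorm : ∀ j, c 0 j = 1)
    (htotal : Function.Injective fun a : Fin n →₀ ℕ => tvec c a)
    (I : Ideal (MvPowerSeries (Fin n) K))
    (f : Fin k → MvPowerSeries (Fin n) K)
    (α : Fin k → (Fin n →₀ ℕ))
    (hf : ∀ i, f i ∈ I)
    (hexp : ∀ i, IsExpOf c (f i) (α i))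
    (hvert : ∀ v : Fin n →₀ ℕ, IsVertex (diagOfIdeal c I) v ↔ ∃ i, v = α i) :
    I = Ideal.span (Set.range f) := by
  refine le_antisymm (fun g hg => ?_) (Ideal.span_le.2 (Set.range_subset_iff.2 hf))
  obtain ⟨q, hq⟩ := MvPowerSeries.exists_coeff_sub_sum_mul_eq_zero
    (wellFounded_toLex_tvec_lt hnorm) (fun x _ _ => toLex_tvec_add_lt_add x) f α
    (fun i => (hexp i).1) (fun i => (hexp i).2) g
  have hrem : g - ∑ i, q i * f i ∈ I :=
    I.sub_mem hg (I.sum_mem fun i _ => I.mul_mem_left _ (hf i))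
  have hzero : g - ∑ i, q i * f i = 0 := by
    by_contra hne
    obtain ⟨a, ha⟩ := exists_isExpOf hnorm htotal hne
    obtain ⟨v, hv, hva⟩ := exists_isVertex_le (show a ∈ diagOfIdeal c I from ⟨_, hrem, ha⟩)
    obtain ⟨i, rfl⟩ := (hvert v).1 hv
    exact ha.1 (hq a ⟨i, hva⟩)
  rw [sub_eq_zero.1 hzero]
  exact Ideal.sum_mem _ fun i _ => Ideal.mul_mem_left _ _ (Ideal.subset_span ⟨i, rfl⟩)

/-- Let `I` be an ideal of `K[[x_1,…,x_n]]` and `T̄` a total normalized positive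
monomial order.  If `f_1,…,f_k ∈ I` have initial exponents `exp_{T̄}(f_i) = α_i`
which are precisely the vertices of the diagram of initial exponents `Δ(I)`,
then `f_1,…,f_k` generate `I`. -/
theorem span_of_vertices {K : Type*} [Field K] {n k r : ℕ}
    (c : Fin (r + 1) → Fin n → ℝ)
    (hnorm : ∀ j, c 0 j = 1)
    (hnonneg : ∀ i j, 0 ≤ c i j)
    (htotal : Function.Injective fun a : Fin n →₀ ℕ => tvec c a)
    (I : Ideal (MvPowerSeries (Fin n) K))
    (f : Fin k → MvPowerSeries (Fin n) K)
    (α : Fin k → (Fin n →₀ ℕ))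
    (hf : ∀ i, f i ∈ I)
    (hexp : ∀ i, IsExpOf c (f i) (α i))
    (hvert : ∀ v : Fin n →₀ ℕ, IsVertex (diagOfIdeal c I) v ↔ ∃ i, v = α i) :
    I = Ideal.span (Set.range f) :=
  span_of_vertices_general c hnorm htotal I f α hf hexp hvert
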